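/- arXiv:2004.14157 — 2 statements merged into one kernel-verified Lean document; each statement's English description precedes it below -/
import Mathlib

section
/- Weak Kodaira decomposition: let H be a complex Hilbert space and d a closed densely defined operator on H with range(d) ⊆ ker(d) (so that d∘d = 0 where defined). Then H decomposes as the orthogonal direct sum H = (ker d ∩ ker d*) ⊕ closure(range d) ⊕ closure(range d*). -/
/-!
For densely defined `d` one has `ker d* = (range d)ᗮ`; for closed `d` also `ker d = (range d*)ᗮ`,
because the graph of `d`, being closed, is its own double orthogonal in `H ⊕ H`, and the
orthogonal of the graph is the graph of `d*` rotated by `(u, v) ↦ (-v, u)`. The hypothesis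
`range d ⊆ ker d` then makes `range d` and `range d*` orthogonal, and splitting
`H = closure (range d) ⊕ (range d)ᗮ` and then
`(range d)ᗮ = closure (range d*) ⊕ ((range d)ᗮ ∩ (range d*)ᗮ)` gives the decomposition.
-/

open Submodule LinearPMap
open scoped InnerProductSpace

namespace LinearPMap

variable {𝕜 E F : Type*} [RCLike 𝕜]
  [NormedAddCommGroup E] [InnerProductSpace 𝕜 E] [CompleteSpace E]
  [NormedAddCommGroup F] [InnerProductSpace 𝕜 F]
  {T : E →ₗ.[𝕜] F}

theorem map_ker_adjoint_eq_orthogonal_range (hT : Dense (T.domain : Set E)) :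
    (LinearMap.ker T†.toFun).map T†.domain.subtype = (LinearMap.range T.toFun)ᗮ := by
  ext y
  constructor
  · rintro ⟨z, hz, rfl⟩
    rintro _ ⟨x, rfl⟩
    have hz : T† z = 0 := hz
    exact ((adjoint_isFormalAdjoint hT).symm x z).trans (by rw [hz, inner_zero_right])
  · intro hy
    have hinner (x : T.domain) : ⟪(0 : E), x⟫_𝕜 = ⟪y, T x⟫_𝕜 := by
      have hx : ⟪T x, y⟫_𝕜 = 0 := hy _ ⟨x, rfl⟩
      rw [inner_zero_left, inner_eq_zero_symm.mp hx]
    have hdom : y ∈ T†.domain := mem_adjoint_domain_of_exists y ⟨0, hinner⟩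
    exact ⟨⟨y, hdom⟩, LinearMap.mem_ker.mpr (adjoint_apply_eq hT ⟨y, hdom⟩ hinner), rfl⟩

theorem IsClosed.mem_graph_of_forall_inner_adjoint [CompleteSpace F]
    (hT : Dense (T.domain : Set E)) (hc : T.IsClosed) {x : E} {y : F}
    (h : ∀ z : T†.domain, ⟪T† z, x⟫_𝕜 = ⟪(z : F), y⟫_𝕜) : (x, y) ∈ T.graph := by
  set G : Submodule 𝕜 (WithLp 2 (E × F)) :=
    T.graph.comap (WithLp.linearEquiv 2 𝕜 (E × F)).toLinearMap
  have hG : Gᗮᗮ = G := by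
    rw [orthogonal_orthogonal_eq_closure]
    exact (hc.preimage (WithLp.prod_continuous_ofLp 2 E F)).submodule_topologicalClosure_eq
  suffices WithLp.toLp 2 (x, y) ∈ Gᗮᗮ by rwa [hG] at this
  intro w hw
  obtain ⟨z, hz, hTz⟩ : ∃ z : T†.domain, (z : F) = w.snd ∧ T† z = -w.fst := by
    have hgraph : (w.snd, -w.fst) ∈ T†.graph := by
      rw [adjoint_graph_eq_graph_adjoint hT, mem_adjoint_iff]
      intro a b hab
      rw [inner_neg_right, sub_neg_eq_add, add_comm]
      exact hw (WithLp.toLp 2 (a, b)) hab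
    simpa [mem_graph_iff] using hgraph
  have hfst : w.fst = -T† z := by rw [hTz, neg_neg]
  change ⟪w.fst, x⟫_𝕜 + ⟪w.snd, y⟫_𝕜 = 0
  rw [hfst, ← hz, ← h z, inner_neg_left, neg_add_cancel]

theorem IsClosed.map_ker_eq_orthogonal_range_adjoint [CompleteSpace F]
    (hT : Dense (T.domain : Set E)) (hc : T.IsClosed) :
    (LinearMap.ker T.toFun).map T.domain.subtype = (LinearMap.range T†.toFun)ᗮ := by
  ext x
  constructor
  · rintro ⟨y, hy, rfl⟩
    rintro _ ⟨z, rfl⟩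
    have hy : T y = 0 := hy
    exact (adjoint_isFormalAdjoint hT z y).trans (by rw [hy, inner_zero_right])
  · intro hx
    have hgraph : (x, (0 : F)) ∈ T.graph :=
      hc.mem_graph_of_forall_inner_adjoint hT fun z => by
        rw [inner_zero_right]
        exact hx _ ⟨z, rfl⟩
    obtain ⟨y, rfl, hy⟩ := (mem_graph_iff T).mp hgraph
    exact ⟨y, hy, rfl⟩

end LinearPMap

namespace Submodule

variable {𝕜 E : Type*} [RCLike 𝕜] [NormedAddCommGroup E] [InnerProductSpace 𝕜 E]
  {U V : Submodule 𝕜 E}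

@[simp]
theorem isOrtho_topologicalClosure_right : U ⟂ V.topologicalClosure ↔ U ⟂ V := by
  rw [isOrtho_iff_le, orthogonal_closure, ← isOrtho_iff_le]

@[simp]
theorem isOrtho_topologicalClosure_left : U.topologicalClosure ⟂ V ↔ U ⟂ V := by
  rw [isOrtho_comm, isOrtho_topologicalClosure_right, isOrtho_comm]

theorem IsOrtho.orthogonal_inf_orthogonal_sup_closure_sup_closure_eq_top [CompleteSpace E]
    (h : U ⟂ V) : Vᗮ ⊓ Uᗮ ⊔ U.topologicalClosure ⊔ V.topologicalClosure = ⊤ := by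
  have : CompleteSpace U.topologicalClosure := U.isClosed_topologicalClosure.completeSpace_coe
  have : CompleteSpace V.topologicalClosure := V.isClosed_topologicalClosure.completeSpace_coe
  have hU : U.topologicalClosure ⊔ Uᗮ = ⊤ := by
    simpa only [orthogonal_closure] using
      sup_orthogonal_of_hasOrthogonalProjection (K := U.topologicalClosure)
  have hV : V.topologicalClosure ⊔ Vᗮ ⊓ Uᗮ = Uᗮ := by
    simpa only [orthogonal_closure] using
      sup_orthogonal_inf_of_hasOrthogonalProjection (isOrtho_topologicalClosure_left.mpr h.symm).le
  calc Vᗮ ⊓ Uᗮ ⊔ U.topologicalClosure ⊔ V.topologicalClosure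
      = U.topologicalClosure ⊔ (V.topologicalClosure ⊔ Vᗮ ⊓ Uᗮ) := by ac_rfl
    _ = ⊤ := by rw [hV, hU]

end Submodule

/-- Weak Kodaira decomposition: for a closed densely defined operator `d` on a
complex Hilbert space `H` with `range d ⊆ ker d`, the space decomposes as the
orthogonal direct sum
`H = (ker d ∩ ker d*) ⊕ closure(range d) ⊕ closure(range d*)`. -/
theorem weak_kodaira_decomposition
    {H : Type*} [NormedAddCommGroup H] [InnerProductSpace ℂ H] [CompleteSpace H]
    (d : H →ₗ.[ℂ] H) (hdense : Dense (d.domain : Set H)) (hclosed : d.IsClosed)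
    (hrange : LinearMap.range d.toFun ≤
      (LinearMap.ker d.toFun).map d.domain.subtype) :
    -- the three pieces
    letI K : Submodule ℂ H := (LinearMap.ker d.toFun).map d.domain.subtype
    letI Kstar : Submodule ℂ H :=
      (LinearMap.ker d.adjoint.toFun).map d.adjoint.domain.subtype
    letI R : Submodule ℂ H := (LinearMap.range d.toFun).topologicalClosure
    letI Rstar : Submodule ℂ H := (LinearMap.range d.adjoint.toFun).topologicalClosure
    (K ⊓ Kstar) ⟂ R ∧ (K ⊓ Kstar) ⟂ Rstar ∧ R ⟂ Rstar ∧
      (K ⊓ Kstar) ⊔ R ⊔ Rstar = ⊤ := by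
  have hK := hclosed.map_ker_eq_orthogonal_range_adjoint hdense
  have hKstar := map_ker_adjoint_eq_orthogonal_range hdense
  have hortho : LinearMap.range d.toFun ⟂ LinearMap.range d†.toFun :=
    isOrtho_iff_le.mpr (hrange.trans hK.le)
  rw [hK, hKstar]
  refine ⟨?_, ?_, ?_, hortho.orthogonal_inf_orthogonal_sup_closure_sup_closure_eq_top⟩
  · exact isOrtho_topologicalClosure_right.mpr ((isOrtho_orthogonal_left _).mono_left inf_le_right)
  · exact isOrtho_topologicalClosure_right.mpr ((isOrtho_orthogonal_left _).mono_left inf_le_left)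
  · simpa only [isOrtho_topologicalClosure_left, isOrtho_topologicalClosure_right] using hortho
end

section
/- Let d be a closed densely defined operator on a Hilbert space H with range(d) ⊆ ker(d). If the quotient vector space ker(d)/range(d) is finite dimensional, then range(d) is a closed subspace of H, and consequently ker(d)/range(d) is isomorphic to the harmonic space ker d ∩ ker d*. -/
/-!
On the closed subspace `ker d`, the operator becomes the bounded map `graph d → ker d`,
`(x, d x) ↦ d x`, whose range `range d` has finite codimension. Adding a finite-dimensional
complement makes it surjective, so by the open mapping theorem it is a quotient map, and the
range is closed. Then `ker d = range d ⊕ (ker d ∩ (range d)ᗮ)`, and `(range d)ᗮ = ker d*`.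
-/

open Submodule

theorem Submodule.image_val_comap_subtype_of_le {R M : Type*} [Semiring R] [AddCommMonoid M]
    [Module R M] {p q : Submodule R M} (hpq : p ≤ q) :
    Subtype.val '' (p.comap q.subtype : Set q) = p := by
  rw [← coe_subtype, ← map_coe, map_comap_subtype, inf_of_le_right hpq]

theorem Submodule.completeSpace_comap_subtype_of_le {R M : Type*} [Ring R] [AddCommGroup M]
    [Module R M] [UniformSpace M] {p q : Submodule R M} [CompleteSpace p] (hpq : p ≤ q) :
    CompleteSpace (p.comap q.subtype) := by
  refine IsComplete.completeSpace_coe ((isComplete_image_iff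
    isUniformEmbedding_subtype_val.isUniformInducing).mp ?_)
  rw [image_val_comap_subtype_of_le hpq]
  exact completeSpace_coe_iff_isComplete.mp ‹_›

theorem ContinuousLinearMap.isClosed_range_of_finiteDimensional_quotient
    {𝕜 X Y : Type*} [NontriviallyNormedField 𝕜] [CompleteSpace 𝕜]
    [NormedAddCommGroup X] [NormedSpace 𝕜 X] [CompleteSpace X]
    [NormedAddCommGroup Y] [NormedSpace 𝕜 Y] [CompleteSpace Y]
    (T : X →L[𝕜] Y) [FiniteDimensional 𝕜 (Y ⧸ (T : X →ₗ[𝕜] Y).range)] :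
    IsClosed (((T : X →ₗ[𝕜] Y).range : Submodule 𝕜 Y) : Set Y) := by
  obtain ⟨F, hF⟩ := (T : X →ₗ[𝕜] Y).range.exists_isCompl
  have : FiniteDimensional 𝕜 F := (quotientEquivOfIsCompl _ F hF).finiteDimensional
  have : CompleteSpace F := FiniteDimensional.complete 𝕜 F
  -- `S (x, f) = T x + f` is onto, hence a quotient map, and `range T` pulls back to `X × {0}`.
  let S : X × F →L[𝕜] Y := T.coprod F.subtypeL
  have hS : Function.Surjective S := by
    intro y
    obtain ⟨r, ⟨x, rfl⟩, f, hf, rfl⟩ := Submodule.mem_sup.mp (hF.sup_eq_top ▸ mem_top : y ∈ _)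
    exact ⟨(x, ⟨f, hf⟩), rfl⟩
  have hpre : S ⁻¹' ((T : X →ₗ[𝕜] Y).range : Set Y) = {p | p.2 = 0} := by
    ext ⟨x, f⟩
    have hTx : T x ∈ (T : X →ₗ[𝕜] Y).range := ⟨x, rfl⟩
    change T x + (f : Y) ∈ (T : X →ₗ[𝕜] Y).range ↔ f = 0
    rw [Submodule.add_mem_iff_right _ hTx]
    exact ⟨fun h => Subtype.ext (disjoint_def.mp hF.disjoint _ h f.2), fun h => h ▸ zero_mem _⟩
  refine ((S.isOpenMap hS).isQuotientMap S.continuous hS).isClosed_preimage.mp ?_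
  rw [hpre]
  exact isClosed_eq continuous_snd continuous_const

theorem LinearPMap.IsClosed.isClosed_ker {R E F : Type*} [CommRing R] [AddCommGroup E]
    [AddCommGroup F] [Module R E] [Module R F] [TopologicalSpace E] [TopologicalSpace F]
    {f : E →ₗ.[R] F} (hf : f.IsClosed) :
    _root_.IsClosed (((LinearMap.ker f.toFun).map f.domain.subtype : Submodule R E) : Set E) := by
  have hker : (((LinearMap.ker f.toFun).map f.domain.subtype : Submodule R E) : Set E) =
      (fun x => (x, 0)) ⁻¹' (f.graph : Set (E × F)) := by
    ext x
    simp only [SetLike.mem_coe, mem_map, LinearMap.mem_ker, Set.mem_preimage, mem_graph_iff,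
      Submodule.coe_subtype]
    exact ⟨fun ⟨y, hy, hyx⟩ => ⟨y, hyx, hy⟩, fun ⟨y, hyx, hy⟩ => ⟨y, hy, hyx⟩⟩
  rw [hker]
  exact hf.preimage (continuous_id.prodMk continuous_const)

theorem LinearPMap.IsClosed.isClosed_range_of_finiteDimensional_quotient
    {𝕜 E F : Type*} [NontriviallyNormedField 𝕜] [CompleteSpace 𝕜]
    [NormedAddCommGroup E] [NormedSpace 𝕜 E] [CompleteSpace E]
    [NormedAddCommGroup F] [NormedSpace 𝕜 F] [CompleteSpace F]
    {T : E →ₗ.[𝕜] F} (hT : T.IsClosed) {K : Submodule 𝕜 F} (hK : _root_.IsClosed (K : Set F))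
    (hTK : LinearMap.range T.toFun ≤ K)
    [FiniteDimensional 𝕜 (K ⧸ (LinearMap.range T.toFun).comap K.subtype)] :
    _root_.IsClosed ((LinearMap.range T.toFun : Submodule 𝕜 F) : Set F) := by
  have : CompleteSpace K := hK.completeSpace_coe
  have : CompleteSpace T.graph := hT.completeSpace_coe
  let S : T.graph →L[𝕜] K := ((ContinuousLinearMap.snd 𝕜 E F).comp T.graph.subtypeL).codRestrict K
    fun g => by
      obtain ⟨y, -, hy⟩ := T.mem_graph_iff.mp g.2
      exact hTK ⟨y, hy⟩
  have hS : (S : T.graph →ₗ[𝕜] K).range = (LinearMap.range T.toFun).comap K.subtype := by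
    ext z
    constructor
    · rintro ⟨g, rfl⟩
      obtain ⟨y, -, hy⟩ := T.mem_graph_iff.mp g.2
      exact ⟨y, hy⟩
    · rintro ⟨u, hu⟩
      exact ⟨⟨(u, T u), T.mem_graph u⟩, Subtype.ext hu⟩
  have : FiniteDimensional 𝕜 (K ⧸ (S : T.graph →ₗ[𝕜] K).range) := by rw [hS]; infer_instance
  have hclosed := S.isClosed_range_of_finiteDimensional_quotient
  rw [hS] at hclosed
  convert hclosed.trans hK
  exact (image_val_comap_subtype_of_le hTK).symm

theorem LinearPMap.ker_adjoint_eq_orthogonal_range {𝕜 E F : Type*} [RCLike 𝕜]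
    [NormedAddCommGroup E] [InnerProductSpace 𝕜 E] [NormedAddCommGroup F]
    [InnerProductSpace 𝕜 F] [CompleteSpace E] {T : E →ₗ.[𝕜] F}
    (hT : Dense (T.domain : Set E)) :
    (LinearMap.ker T.adjoint.toFun).map T.adjoint.domain.subtype =
      (LinearMap.range T.toFun)ᗮ := by
  ext y
  simp only [mem_map, LinearMap.mem_ker, mem_orthogonal, Submodule.coe_subtype]
  constructor
  · rintro ⟨y, hy, rfl⟩ _ ⟨x, rfl⟩
    rw [← inner_conj_symm, toFun_eq_coe, ← adjoint_isFormalAdjoint hT y x]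
    simp [show T.adjoint y = 0 from hy]
  · intro hy
    have hzero : ∀ x : T.domain, inner 𝕜 (0 : E) (x : E) = inner 𝕜 y (T x) := fun x => by
      rw [inner_zero_left, ← inner_conj_symm, ← toFun_eq_coe, hy _ ⟨x, rfl⟩]; simp
    exact ⟨⟨y, mem_adjoint_domain_of_exists y ⟨0, hzero⟩⟩, adjoint_apply_eq hT _ hzero, rfl⟩

theorem Submodule.orthogonal_comap_subtype {𝕜 H : Type*} [RCLike 𝕜] [NormedAddCommGroup H]
    [InnerProductSpace 𝕜 H] {R K : Submodule 𝕜 H} (hRK : R ≤ K) :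
    (R.comap K.subtype)ᗮ = Rᗮ.comap K.subtype := by
  ext z
  simp only [mem_orthogonal, mem_comap, Submodule.coe_subtype, Submodule.coe_inner]
  exact ⟨fun h u hu => h ⟨u, hRK hu⟩ hu, fun h u hu => h u hu⟩

noncomputable def Submodule.quotientComapSubtypeEquivInfOrthogonal {𝕜 H : Type*} [RCLike 𝕜]
    [NormedAddCommGroup H] [InnerProductSpace 𝕜 H] {R K : Submodule 𝕜 H} [CompleteSpace R]
    (hRK : R ≤ K) : (K ⧸ R.comap K.subtype) ≃ₗ[𝕜] ↥(K ⊓ Rᗮ) :=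
  have := completeSpace_comap_subtype_of_le hRK
  have hcomap : (R.comap K.subtype)ᗮ = (K ⊓ Rᗮ).comap K.subtype := by
    rw [orthogonal_comap_subtype hRK, comap_inf, comap_subtype_self, top_inf_eq]
  (quotientEquivOfIsCompl _ _ (isCompl_orthogonal _)).trans <|
    (LinearEquiv.ofEq _ _ hcomap).trans (comapSubtypeEquivOfLe inf_le_left)

/-- If `d` is a closed densely defined operator on a Hilbert space with
`range d ⊆ ker d`, and the L²-cohomology `ker d / range d` is finite
dimensional, then `range d` is closed, and consequently `ker d / range d` is
isomorphic to the harmonic space `ker d ∩ ker d*`. -/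
theorem finite_dim_cohomology_implies_closed_range
    {H : Type*} [NormedAddCommGroup H] [InnerProductSpace ℂ H] [CompleteSpace H]
    (d : H →ₗ.[ℂ] H) (hdense : Dense (d.domain : Set H)) (hclosed : d.IsClosed)
    (hrange : LinearMap.range d.toFun ≤
      (LinearMap.ker d.toFun).map d.domain.subtype)
    (hfin : FiniteDimensional ℂ
      (((LinearMap.ker d.toFun).map d.domain.subtype) ⧸
        ((LinearMap.range d.toFun).comap
          ((LinearMap.ker d.toFun).map d.domain.subtype).subtype))) :
    IsClosed ((LinearMap.range d.toFun : Submodule ℂ H) : Set H) ∧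
      Nonempty
        ((((LinearMap.ker d.toFun).map d.domain.subtype) ⧸
            ((LinearMap.range d.toFun).comap
              ((LinearMap.ker d.toFun).map d.domain.subtype).subtype)) ≃ₗ[ℂ]
          ↥(((LinearMap.ker d.toFun).map d.domain.subtype) ⊓
            ((LinearMap.ker d.adjoint.toFun).map d.adjoint.domain.subtype))) := by
  have hRc := hclosed.isClosed_range_of_finiteDimensional_quotient hclosed.isClosed_ker hrange
  have : CompleteSpace (LinearMap.range d.toFun) := hRc.completeSpace_coe
  rw [LinearPMap.ker_adjoint_eq_orthogonal_range hdense]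
  exact ⟨hRc, ⟨quotientComapSubtypeEquivInfOrthogonal hrange⟩⟩
end
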